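/- Let (a_n)_{n≥0} be a sequence of nonzero complex numbers satisfying |a_0| ≥ |a_1| ≥ |a_2| ≥ ⋯ and ∑_{n=0}^∞ |a_n|² < ∞, and let T be the corresponding weighted shift. Then for every S ∈ A_T, writing c_k = ⟨S e_0, e_k⟩ for k ≥ 1, the partial sums ∑_{k=1}^n (c_k / (a_0 a_1 ⋯ a_{k−1})) T^k converge to S in the operator norm as n → ∞. -/

import Mathlib

noncomputable section

open scoped InnerProductSpace

/-- `H = ℓ²(ℕ)` over `ℂ`. -/
abbrev H : Type := lp (fun _ : ℕ => ℂ) 2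

/-- The standard orthonormal basis of `ℓ²(ℕ)`. -/
def e (n : ℕ) : H := lp.single 2 n 1

/-- `A_T`: the operator-norm closure of the polynomials in `T` with zero constant term. -/
def polyAlg (T : H →L[ℂ] H) : Set (H →L[ℂ] H) :=
  closure ((NonUnitalAlgebra.adjoin ℂ {T} : NonUnitalSubalgebra ℂ (H →L[ℂ] H)) :
    Set (H →L[ℂ] H))

/-! The matrix of every operator `S` in `A_T` is that of a formal series
`∑_{k ≥ 1} (c_k / (a_0 ⋯ a_{k-1})) T^k`, since this is a closed linear condition satisfied by
each `T^k`: the `m`-th column of `S` is its zeroth column `(c_k)_k`, shifted down by `m` and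
rescaled entrywise by `(a_m ⋯ a_{m+k-1}) / (a_0 ⋯ a_{k-1})`, a factor of modulus at most
`|a_m| / |a_0|` since `|a_n|` decreases. Such an operator `R` therefore satisfies
`‖R e_m‖ ≤ ‖R e_0‖ |a_m| / |a_0|`, and Cauchy–Schwarz over the columns gives
`‖R‖ ≤ ‖R e_0‖ ‖a‖₂ / |a_0|`. For `R = S - (n-th partial sum)` the zeroth column is the tail
`∑_{k > n} c_k e_k` of `S e_0`, which tends to zero. -/

open Finset Filter Topology
open scoped ENNReal

section L2

lemma coe_default_hilbertBasis : ⇑(default : HilbertBasis ℕ ℂ H) = e := by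
  ext1 n; rw [← HilbertBasis.repr_symm_single]; rfl

lemma orthonormal_e : Orthonormal ℂ e :=
  coe_default_hilbertBasis ▸ (default : HilbertBasis ℕ ℂ H).orthonormal

lemma inner_e_e (i j : ℕ) : ⟪e i, e j⟫_ℂ = if i = j then 1 else 0 :=
  orthonormal_iff_ite.mp orthonormal_e i j

lemma inner_e_left (j : ℕ) (x : H) : ⟪e j, x⟫_ℂ = x j := by
  simp [e, lp.inner_single_left]

lemma hasSum_inner_e_smul_e (x : H) : HasSum (fun k => ⟪e k, x⟫_ℂ • e k) x := by
  simpa only [HilbertBasis.repr_apply_apply, coe_default_hilbertBasis]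
    using (default : HilbertBasis ℕ ℂ H).hasSum_repr x

lemma norm_sq_eq_tsum (x : H) : ‖x‖ ^ 2 = ∑' i, ‖x i‖ ^ 2 := by
  simpa using lp.norm_rpow_eq_tsum (p := 2) (by norm_num) x

lemma summable_norm_sq (x : H) : Summable fun i => ‖x i‖ ^ 2 := by
  simpa using (lp.hasSum_norm (p := 2) (by norm_num) x).summable

lemma tendsto_sum_Icc_inner_e_smul_e (x : H) (hx : ⟪e 0, x⟫_ℂ = 0) :
    Tendsto (fun n => ∑ k ∈ Icc 1 n, ⟪e k, x⟫_ℂ • e k) atTop (𝓝 x) := by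
  refine ((hasSum_inner_e_smul_e x).tendsto_sum_nat.comp (tendsto_add_atTop_nat 1)).congr
    fun n => ?_
  rw [Function.comp_apply, range_eq_Ico, sum_eq_sum_Ico_succ_bot (by omega), hx, zero_smul,
    zero_add]
  rfl

theorem opNorm_le_of_norm_apply_e_le {F : Type*} [NormedAddCommGroup F] [NormedSpace ℂ F]
    (S : H →L[ℂ] F) (b : H) {C : ℝ} (hC : 0 ≤ C) (h : ∀ m, ‖S (e m)‖ ≤ C * ‖b m‖) :
    ‖S‖ ≤ C * ‖b‖ := by
  refine S.opNorm_le_bound (by positivity) fun x => ?_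
  have hholder : (2 : ℝ≥0∞).toReal.HolderConjugate (2 : ℝ≥0∞).toReal := by
    rw [Real.holderConjugate_iff]; norm_num
  have hSx : HasSum (fun m => x m • S (e m)) (S x) := by
    simpa only [map_smul, inner_e_left] using (hasSum_inner_e_smul_e x).mapL S
  calc ‖S x‖ ≤ C * ∑' m, ‖x m‖ * ‖b m‖ :=
        hSx.norm_le_of_bounded ((lp.summable_mul hholder x b).hasSum.mul_left C) fun m => by
          rw [norm_smul, mul_left_comm]
          exact mul_le_mul_of_nonneg_left (h m) (norm_nonneg _)
    _ ≤ C * (‖x‖ * ‖b‖) := mul_le_mul_of_nonneg_left (lp.tsum_mul_le_mul_norm' hholder x b) hC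
    _ = C * ‖b‖ * ‖x‖ := by ring

end L2

def weightProd (a : ℕ → ℂ) (m k : ℕ) : ℂ := ∏ i ∈ range k, a (m + i)

section WeightedShift

variable {a : ℕ → ℂ}

lemma weightProd_zero_left (k : ℕ) : weightProd a 0 k = ∏ i ∈ range k, a i := by
  simp [weightProd]

lemma weightProd_ne_zero (ha : ∀ n, a n ≠ 0) (m k : ℕ) : weightProd a m k ≠ 0 :=
  prod_ne_zero_iff.mpr fun i _ => ha (m + i)

lemma weightProd_succ (m k : ℕ) :
    weightProd a m (k + 1) = a m * weightProd a (m + 1) k := by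
  simp only [weightProd, prod_range_succ', add_zero, mul_comm, add_assoc, add_comm 1]

lemma norm_weightProd_div_le (ha : ∀ n, a n ≠ 0) (hanti : Antitone fun n => ‖a n‖) (m : ℕ)
    {k : ℕ} (hk : 0 < k) : ‖weightProd a m k / weightProd a 0 k‖ ≤ ‖a m‖ / ‖a 0‖ := by
  obtain ⟨k, rfl⟩ : ∃ j, k = j + 1 := ⟨k - 1, by omega⟩
  have hpos : 0 < ‖weightProd a 0 (k + 1)‖ := norm_pos_iff.mpr (weightProd_ne_zero ha 0 _)
  rw [norm_div, div_le_div_iff₀ hpos (norm_pos_iff.mpr (ha 0)),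
    weightProd_succ, weightProd_succ, norm_mul, norm_mul, zero_add]
  have htail : ‖weightProd a (m + 1) k‖ ≤ ‖weightProd a 1 k‖ := by
    simp only [weightProd, norm_prod]
    exact prod_le_prod (fun _ _ => norm_nonneg _) fun i _ => hanti (by omega)
  calc ‖a m‖ * ‖weightProd a (m + 1) k‖ * ‖a 0‖
      ≤ ‖a m‖ * ‖weightProd a 1 k‖ * ‖a 0‖ := by gcongr
    _ = ‖a m‖ * (‖a 0‖ * ‖weightProd a 1 k‖) := by ring

lemma pow_apply_e {T : H →L[ℂ] H} (hT : ∀ n, T (e n) = a n • e (n + 1)) (k m : ℕ) :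
    (T ^ k) (e m) = weightProd a m k • e (m + k) := by
  induction k generalizing m with
  | zero => simp [weightProd]
  | succ k ih =>
    rw [pow_succ, mul_apply_eq_comp, hT, map_smul, ih, smul_smul,
      weightProd_succ, add_right_comm, add_assoc]

end WeightedShift

/-- Operators whose matrix is that of the formal series `∑_{k ≥ 1} (cₖ / weightProd a 0 k) • Tᵏ`
with `cₖ = ⟪e k, S (e 0)⟫`. -/
def weightedShiftSeries (a : ℕ → ℂ) : Submodule ℂ (H →L[ℂ] H) where
  carrier := {S | (∀ m j, j ≤ m → ⟪e j, S (e m)⟫_ℂ = 0) ∧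
    ∀ m k, ⟪e (m + k), S (e m)⟫_ℂ = ⟪e k, S (e 0)⟫_ℂ * (weightProd a m k / weightProd a 0 k)}
  zero_mem' := by simp
  add_mem' := by
    rintro S₁ S₂ ⟨h₁, h₁'⟩ ⟨h₂, h₂'⟩
    refine ⟨fun m j hj => ?_, fun m k => ?_⟩
    · simp [h₁ m j hj, h₂ m j hj]
    · simp only [add_apply, inner_add_right, h₁', h₂']
      ring
  smul_mem' := by
    rintro c S ⟨h, h'⟩
    refine ⟨fun m j hj => ?_, fun m k => ?_⟩
    · simp [h m j hj]
    · simp only [smul_apply, inner_smul_right, h']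
      ring

section WeightedShiftSeries

variable {a : ℕ → ℂ}

lemma isClosed_weightedShiftSeries :
    IsClosed (weightedShiftSeries a : Set (H →L[ℂ] H)) := by
  have hentry : ∀ (j m : ℕ), Continuous fun S : H →L[ℂ] H => ⟪e j, S (e m)⟫_ℂ :=
    fun j m => continuous_const.inner (ContinuousLinearMap.apply ℂ H (e m)).continuous
  change IsClosed {S : H →L[ℂ] H | _ ∧ _}
  simp only [Set.ofPred_and, Set.ofPred_forall]
  refine .inter ?_ ?_
  · exact isClosed_iInter fun m => isClosed_iInter fun j => isClosed_iInter fun _ =>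
      isClosed_eq (hentry _ _) continuous_const
  · exact isClosed_iInter fun m => isClosed_iInter fun k =>
      isClosed_eq (hentry _ _) ((hentry _ _).mul continuous_const)

lemma pow_succ_mem_weightedShiftSeries (ha : ∀ n, a n ≠ 0) {T : H →L[ℂ] H}
    (hT : ∀ n, T (e n) = a n • e (n + 1)) (l : ℕ) : T ^ (l + 1) ∈ weightedShiftSeries a := by
  refine ⟨fun m j hj => ?_, fun m k => ?_⟩
  · rw [pow_apply_e hT, inner_smul_right, inner_e_e, if_neg (by omega), mul_zero]
  · rw [pow_apply_e hT, pow_apply_e hT, inner_smul_right, inner_smul_right, inner_e_e,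
      inner_e_e]
    by_cases hk : k = l + 1
    · subst hk
      simp [mul_div_cancel₀ _ (weightProd_ne_zero ha 0 _)]
    · simp [hk]

lemma polyAlg_subset_weightedShiftSeries (ha : ∀ n, a n ≠ 0) {T : H →L[ℂ] H}
    (hT : ∀ n, T (e n) = a n • e (n + 1)) : polyAlg T ⊆ weightedShiftSeries a := by
  refine closure_minimal (fun S hS => ?_) isClosed_weightedShiftSeries
  have hspan : S ∈ (NonUnitalAlgebra.adjoin ℂ {T}).toSubmodule := hS
  rw [NonUnitalAlgebra.adjoin_eq_span] at hspan
  refine Submodule.span_le.mpr (fun P hP => ?_) hspan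
  obtain ⟨l, rfl⟩ : ∃ l, P = T ^ (l + 1) := by
    induction hP using Subsemigroup.closure_induction with
    | mem P hP => exact ⟨0, by simpa using hP⟩
    | mul P Q _ _ hP hQ =>
      obtain ⟨⟨i, rfl⟩, ⟨j, rfl⟩⟩ := And.intro hP hQ
      exact ⟨i + j + 1, by rw [← pow_add]; ring_nf⟩
  exact pow_succ_mem_weightedShiftSeries ha hT l

lemma norm_apply_e_le_of_mem_weightedShiftSeries (ha : ∀ n, a n ≠ 0)
    (hanti : Antitone fun n => ‖a n‖) {S : H →L[ℂ] H} (hS : S ∈ weightedShiftSeries a)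
    (m : ℕ) : ‖S (e m)‖ ≤ ‖S (e 0)‖ / ‖a 0‖ * ‖a m‖ := by
  have hentry : ∀ k, ‖S (e m) (k + m)‖ ≤ ‖a m‖ / ‖a 0‖ * ‖S (e 0) k‖ := fun k => by
    rw [← inner_e_left, ← inner_e_left, add_comm, hS.2 m k, norm_mul, mul_comm]
    rcases k.eq_zero_or_pos with rfl | hk
    · simp [hS.1 0 0 le_rfl]
    · gcongr
      exact norm_weightProd_div_le ha hanti m hk
  have hsq : ‖S (e m)‖ ^ 2 ≤ (‖a m‖ / ‖a 0‖ * ‖S (e 0)‖) ^ 2 := by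
    rw [norm_sq_eq_tsum, ← (summable_norm_sq _).sum_add_tsum_nat_add m,
      sum_eq_zero fun j hj => by rw [← inner_e_left, hS.1 m j (mem_range.mp hj).le, norm_zero,
        zero_pow two_ne_zero], zero_add, mul_pow, norm_sq_eq_tsum, ← tsum_mul_left]
    refine Summable.tsum_le_tsum (fun k => ?_) ((summable_nat_add_iff m).mpr (summable_norm_sq _))
      ((summable_norm_sq _).mul_left _)
    rw [← mul_pow]
    gcongr
    exact hentry k
  calc ‖S (e m)‖ ≤ ‖a m‖ / ‖a 0‖ * ‖S (e 0)‖ :=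
        (pow_le_pow_iff_left₀ (norm_nonneg _) (by positivity) two_ne_zero).mp hsq
    _ = ‖S (e 0)‖ / ‖a 0‖ * ‖a m‖ := by ring

lemma sum_smul_pow_apply_e_zero (ha : ∀ n, a n ≠ 0) {T : H →L[ℂ] H}
    (hT : ∀ n, T (e n) = a n • e (n + 1)) (c : ℕ → ℂ) (s : Finset ℕ) :
    (∑ k ∈ s, (c k / ∏ i ∈ range k, a i) • T ^ k) (e 0) = ∑ k ∈ s, c k • e k := by
  simp only [_root_.sum_apply, smul_apply, pow_apply_e hT,
    smul_smul, ← weightProd_zero_left, div_mul_cancel₀ _ (weightProd_ne_zero ha 0 _), zero_add]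

end WeightedShiftSeries

/-- For a weighted shift with nonzero weights, `|a_0| ≥ |a_1| ≥ ⋯` and `∑ |a_n|² < ∞`:
for every `S ∈ A_T`, writing `c_k = ⟨S e_0, e_k⟩` (the coefficient of `e_k` in `S e_0`),
the partial sums `∑_{k=1}^n (c_k / (a_0 ⋯ a_{k-1})) T^k` converge to `S` in operator norm. -/
theorem fourier_partial_sums_converge (a : ℕ → ℂ) (ha : ∀ n, a n ≠ 0)
    (hdec : ∀ n, ‖a (n + 1)‖ ≤ ‖a n‖)
    (hsum : Summable fun n => ‖a n‖ ^ 2)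
    (T : H →L[ℂ] H) (hT : ∀ n, T (e n) = a n • e (n + 1)) :
    ∀ S ∈ polyAlg T,
      Filter.Tendsto
        (fun n : ℕ => ∑ k ∈ Finset.Icc 1 n,
          ((⟪e k, S (e 0)⟫_ℂ) / ∏ i ∈ Finset.range k, a i) • T ^ k)
        Filter.atTop (nhds S) := by
  intro S hS
  have hS' := polyAlg_subset_weightedShiftSeries ha hT hS
  let b : H := ⟨a, memℓp_gen (by simpa using hsum)⟩
  set P : ℕ → H →L[ℂ] H :=
    fun n => ∑ k ∈ Icc 1 n, (⟪e k, S (e 0)⟫_ℂ / ∏ i ∈ range k, a i) • T ^ k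
  have hmem : ∀ n, S - P n ∈ weightedShiftSeries a := fun n =>
    sub_mem hS' (sum_mem fun k hk => Submodule.smul_mem _ _ <| by
      obtain ⟨l, rfl⟩ : ∃ l, k = l + 1 := ⟨k - 1, by grind⟩
      exact pow_succ_mem_weightedShiftSeries ha hT l)
  have hcol : Tendsto (fun n => (S - P n) (e 0)) atTop (𝓝 0) := by
    simpa [P, sum_smul_pow_apply_e_zero ha hT] using
      (tendsto_const_nhds (x := S (e 0))).sub
        (tendsto_sum_Icc_inner_e_smul_e (S (e 0)) (hS'.1 0 0 le_rfl))
  rw [tendsto_iff_norm_sub_tendsto_zero]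
  refine squeeze_zero (fun n => norm_nonneg _) (fun n => ?_)
    (by simpa using (hcol.norm.div_const ‖a 0‖).mul_const ‖b‖)
  rw [norm_sub_rev]
  exact opNorm_le_of_norm_apply_e_le _ b (by positivity)
    (norm_apply_e_le_of_mem_weightedShiftSeries ha (antitone_nat_of_succ_le hdec) (hmem n))
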